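/- arXiv:2601.06462 — 5 statements merged into one kernel-verified Lean document; each statement's English description precedes it below -/
import Mathlib

section
/- Let K = P Pᵀ with P an invertible n×n real matrix, and let A be any m×n real matrix. Set Q = A P. Then K − K Aᵀ (A K Aᵀ)⁺ A K = P (I − Q⁺Q) (I − Q⁺Q)ᵀ Pᵀ. -/
open Matrix Real

/-- The four Penrose conditions characterizing the Moore-Penrose pseudoinverse. -/
def IsMoorePenrose {m n : Type*} [Fintype m] [Fintype n]
    (Q : Matrix m n ℝ) (Qp : Matrix n m ℝ) : Prop :=
  Q * Qp * Q = Q ∧ Qp * Q * Qp = Qp ∧ (Q * Qp)ᵀ = Q * Qp ∧ (Qp * Q)ᵀ = Qp * Q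

lemma mp_unique {m n : Type*} [Fintype m] [Fintype n]
    (M : Matrix m n ℝ) (X Y : Matrix n m ℝ)
    (hX : IsMoorePenrose M X) (hY : IsMoorePenrose M Y) : X = Y := by
  obtain ⟨hX1, hX2, hX3, hX4⟩ := hX
  obtain ⟨hY1, hY2, hY3, hY4⟩ := hY
  have h1 : M * X = M * Y := by
    calc M * X = (M * X)ᵀ := hX3.symm
    _ = ((M * Y * M) * X)ᵀ := by rw [hY1]
    _ = ((M * Y) * (M * X))ᵀ := by simp only [Matrix.mul_assoc]
    _ = (M * X)ᵀ * (M * Y)ᵀ := transpose_mul _ _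
    _ = (M * X) * (M * Y) := by rw [hX3, hY3]
    _ = (M * X * M) * Y := by simp only [Matrix.mul_assoc]
    _ = M * Y := by rw [hX1]
  have h2 : X * M = Y * M := by
    calc X * M = (X * M)ᵀ := hX4.symm
    _ = (X * (M * Y * M))ᵀ := by rw [hY1]
    _ = ((X * M) * (Y * M))ᵀ := by simp only [Matrix.mul_assoc]
    _ = (Y * M)ᵀ * (X * M)ᵀ := transpose_mul _ _
    _ = (Y * M) * (X * M) := by rw [hX4, hY4]
    _ = Y * (M * X * M) := by simp only [Matrix.mul_assoc]
    _ = Y * M := by rw [hX1]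
  calc X = X * M * X := hX2.symm
  _ = X * (M * Y) := by rw [Matrix.mul_assoc, h1]
  _ = (X * M) * Y := by rw [Matrix.mul_assoc]
  _ = Y * M * Y := by rw [h2]
  _ = Y := hY2

lemma mp_gram {m n : Type*} [Fintype m] [Fintype n]
    (Q : Matrix m n ℝ) (Qp : Matrix n m ℝ) (h : IsMoorePenrose Q Qp) :
    IsMoorePenrose (Q * Qᵀ) (Qpᵀ * Qp) := by
  obtain ⟨h1, h2, h3, h4⟩ := h
  have e1 : Q * Qᵀ * (Qpᵀ * Qp) = Q * Qp := by
    calc Q * Qᵀ * (Qpᵀ * Qp) = Q * ((Qp * Q)ᵀ * Qp) := by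
          simp only [transpose_mul, Matrix.mul_assoc]
    _ = Q * (Qp * Q * Qp) := by rw [h4]
    _ = Q * Qp := by rw [h2]
  have e2 : (Qpᵀ * Qp) * (Q * Qᵀ) = Q * Qp := by
    calc (Qpᵀ * Qp) * (Q * Qᵀ) = Qpᵀ * (Qp * Q * Qᵀ) := by
          simp only [Matrix.mul_assoc]
    _ = Qpᵀ * ((Qp * Q)ᵀ * Qᵀ) := by rw [h4]
    _ = Qpᵀ * (Q * Qp * Q)ᵀ := by simp only [transpose_mul, Matrix.mul_assoc]
    _ = Qpᵀ * Qᵀ := by rw [h1]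
    _ = (Q * Qp)ᵀ := (transpose_mul _ _).symm
    _ = Q * Qp := h3
  refine ⟨?_, ?_, ?_, ?_⟩
  · calc Q * Qᵀ * (Qpᵀ * Qp) * (Q * Qᵀ) = (Q * Qp) * (Q * Qᵀ) := by rw [e1]
    _ = (Q * Qp * Q) * Qᵀ := by simp only [Matrix.mul_assoc]
    _ = Q * Qᵀ := by rw [h1]
  · calc (Qpᵀ * Qp) * (Q * Qᵀ) * (Qpᵀ * Qp) = (Q * Qp) * (Qpᵀ * Qp) := by rw [e2]
    _ = (Q * Qp)ᵀ * (Qpᵀ * Qp) := by rw [h3]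
    _ = Qpᵀ * ((Qp * Q)ᵀ * Qp) := by simp only [transpose_mul, Matrix.mul_assoc]
    _ = Qpᵀ * (Qp * Q * Qp) := by rw [h4]
    _ = Qpᵀ * Qp := by rw [h2]
  · rw [e1, h3]
  · rw [e2, h3]

theorem posterior_cov_factorization {m n : Type*} [Fintype m] [Fintype n] [DecidableEq n]
    (P : Matrix n n ℝ) (hP : IsUnit P.det) (A : Matrix m n ℝ)
    (W : Matrix m m ℝ) (Qp : Matrix n m ℝ)
    (hW : IsMoorePenrose (A * (P * Pᵀ) * Aᵀ) W)
    (hQp : IsMoorePenrose (A * P) Qp) :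
    (P * Pᵀ) - (P * Pᵀ) * Aᵀ * W * A * (P * Pᵀ)
      = P * (1 - Qp * (A * P)) * (1 - Qp * (A * P))ᵀ * Pᵀ := by
  obtain ⟨h1, h2, h3, h4⟩ := hQp
  have hM : A * (P * Pᵀ) * Aᵀ = (A * P) * (A * P)ᵀ := by
    simp only [transpose_mul, Matrix.mul_assoc]
  rw [hM] at hW
  have hWX : W = Qpᵀ * Qp := mp_unique _ _ _ hW (mp_gram _ _ ⟨h1, h2, h3, h4⟩)
  rw [hWX]
  have hidem : (Qp * (A * P)) * (Qp * (A * P)) = Qp * (A * P) := by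
    calc (Qp * (A * P)) * (Qp * (A * P)) = Qp * (A * P * Qp * (A * P)) := by
          simp only [Matrix.mul_assoc]
    _ = Qp * (A * P) := by rw [h1]
  have hterm : (P * Pᵀ) * Aᵀ * (Qpᵀ * Qp) * A * (P * Pᵀ)
      = P * ((Qp * (A * P))ᵀ * (Qp * (A * P))) * Pᵀ := by
    simp only [transpose_mul, Matrix.mul_assoc]
  rw [hterm, h4, hidem]
  have ht : (1 - Qp * (A * P))ᵀ = 1 - Qp * (A * P) := by
    rw [transpose_sub, transpose_one, h4]
  rw [ht, Matrix.mul_assoc P (1 - Qp * (A * P)) (1 - Qp * (A * P))]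
  have hJ : (1 - Qp * (A * P)) * (1 - Qp * (A * P)) = 1 - Qp * (A * P) := by
    calc (1 - Qp * (A * P)) * (1 - Qp * (A * P))
        = 1 - Qp * (A * P) - Qp * (A * P) + (Qp * (A * P)) * (Qp * (A * P)) := by
          noncomm_ring
    _ = 1 - Qp * (A * P) := by rw [hidem]; abel
  rw [hJ]
  noncomm_ring
end

section
/- Let L be an n×n real matrix, λ an eigenvalue of L, A = L − λI, K = PPᵀ with P invertible, and K_N = K − K Aᵀ (A K Aᵀ)⁺ A K. Then K_N is a nonzero matrix. -/
open Matrix Real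

/-! If `K - K Aᵀ W A K = 0` with `K = P Pᵀ` invertible, then `K (Aᵀ W A) K = K` forces
`Aᵀ W A = K⁻¹`, so `det A` is a unit; but `det (L - λ I) = 0` for an eigenvalue `λ`. -/

namespace Matrix

variable {n R : Type*} [Fintype n] [DecidableEq n] [CommRing R]

theorem det_sub_smul_one_eq_zero_of_mulVec_eq_smul [IsDomain R] {L : Matrix n n R} {lam : R}
    {v : n → R} (hv : v ≠ 0) (hLv : L *ᵥ v = lam • v) : (L - lam • 1).det = 0 :=
  exists_mulVec_eq_zero_iff.mp ⟨v, hv, by rw [sub_mulVec, hLv, smul_mulVec, one_mulVec, sub_self]⟩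

theorem isUnit_det_of_mul_mul_self_eq_self {K B : Matrix n n R} (hK : IsUnit K.det)
    (h : K * B * K = K) : IsUnit B.det := by
  have hdet : K.det * (B.det * K.det) = K.det * 1 := by
    rw [mul_one, ← mul_assoc, ← det_mul, ← det_mul, h]
  exact .of_mul_eq_one _ (hK.mul_left_cancel hdet)

end Matrix

theorem posterior_cov_ne_zero_of_eigenvalue_general {n : Type*} [Fintype n] [DecidableEq n]
    (L P W : Matrix n n ℝ) (lam : ℝ) (hP : IsUnit P.det)
    (hlam : ∃ v : n → ℝ, v ≠ 0 ∧ L *ᵥ v = lam • v) :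
    (P * Pᵀ) - (P * Pᵀ) * (L - lam • 1)ᵀ * W * (L - lam • 1) * (P * Pᵀ) ≠ 0 := by
  obtain ⟨v, hv, hLv⟩ := hlam
  intro h
  have hK : IsUnit (P * Pᵀ).det := by
    rw [det_mul, det_transpose]
    exact hP.mul hP
  have hKBK : P * Pᵀ * ((L - lam • 1)ᵀ * W * (L - lam • 1)) * (P * Pᵀ) = P * Pᵀ := by
    simpa only [Matrix.mul_assoc] using (sub_eq_zero.mp h).symm
  have hA : IsUnit (L - lam • 1).det := by
    have hB := isUnit_det_of_mul_mul_self_eq_self hK hKBK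
    rw [det_mul, det_mul] at hB
    exact isUnit_of_mul_isUnit_right hB
  exact hA.ne_zero (det_sub_smul_one_eq_zero_of_mulVec_eq_smul hv hLv)

theorem posterior_cov_ne_zero_of_eigenvalue {n : Type*} [Fintype n] [DecidableEq n]
    (L P W : Matrix n n ℝ) (lam : ℝ) (hP : IsUnit P.det)
    (hlam : ∃ v : n → ℝ, v ≠ 0 ∧ L *ᵥ v = lam • v)
    (hW : IsMoorePenrose ((L - lam • 1) * (P * Pᵀ) * (L - lam • 1)ᵀ) W) :
    (P * Pᵀ) - (P * Pᵀ) * (L - lam • 1)ᵀ * W * (L - lam • 1) * (P * Pᵀ) ≠ 0 :=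
  posterior_cov_ne_zero_of_eigenvalue_general L P W lam hP hlam
end

section
/- Let A be an m×n real matrix and K an n×n symmetric positive definite matrix. Then K − K Aᵀ (A K Aᵀ)⁺ A K is symmetric positive semidefinite. -/
open Matrix Real

namespace IsMoorePenrose

variable {m n : Type*} [Fintype m] [Fintype n]

theorem transpose {Q : Matrix m n ℝ} {Qp : Matrix n m ℝ} (h : IsMoorePenrose Q Qp) :
    IsMoorePenrose Qᵀ Qpᵀ := by
  obtain ⟨h₁, h₂, h₃, h₄⟩ := h
  refine ⟨?_, ?_, ?_, ?_⟩
  · rw [← transpose_mul, ← transpose_mul, ← Matrix.mul_assoc, h₁]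
  · rw [← transpose_mul, ← transpose_mul, ← Matrix.mul_assoc, h₂]
  · rw [← transpose_mul, transpose_transpose, h₄]
  · rw [← transpose_mul, transpose_transpose, h₃]

theorem unique {Q : Matrix m n ℝ} {P₁ P₂ : Matrix n m ℝ} (h₁ : IsMoorePenrose Q P₁)
    (h₂ : IsMoorePenrose Q P₂) : P₁ = P₂ := by
  obtain ⟨hQPQ₁, hPQP₁, hQP₁, hPQ₁⟩ := h₁
  obtain ⟨hQPQ₂, hPQP₂, hQP₂, hPQ₂⟩ := h₂
  have left : P₁ * Q = P₂ * Q :=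
    calc P₁ * Q = (P₁ * Q)ᵀ * (P₂ * Q)ᵀ := by
          rw [hPQ₁, hPQ₂, Matrix.mul_assoc P₁, ← Matrix.mul_assoc Q, hQPQ₂]
      _ = (Q * P₁ * Q)ᵀ * P₂ᵀ := by simp only [transpose_mul, Matrix.mul_assoc]
      _ = P₂ * Q := by rw [hQPQ₁, ← transpose_mul, hPQ₂]
  have right : Q * P₁ = Q * P₂ :=
    calc Q * P₁ = (Q * P₂)ᵀ * (Q * P₁)ᵀ := by rw [hQP₁, hQP₂, ← Matrix.mul_assoc, hQPQ₂]
      _ = P₂ᵀ * (Q * P₁ * Q)ᵀ := by simp only [transpose_mul, Matrix.mul_assoc]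
      _ = Q * P₂ := by rw [hQPQ₁, ← transpose_mul, hQP₂]
  calc P₁ = P₁ * Q * P₁ := hPQP₁.symm
    _ = P₂ * Q * P₂ := by rw [left, Matrix.mul_assoc, right, ← Matrix.mul_assoc]
    _ = P₂ := hPQP₂

theorem isSymm {Q W : Matrix m m ℝ} (hQ : Q.IsSymm) (h : IsMoorePenrose Q W) : W.IsSymm := by
  have hT := h.transpose
  rw [hQ.eq] at hT
  exact hT.unique h

end IsMoorePenrose

theorem Matrix.PosSemidef.sub_of_isSymm_of_mul_mul_eq {m n : Type*} [Fintype m] [Fintype n]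
    {K : Matrix n n ℝ} (hK : K.PosSemidef) (A : Matrix m n ℝ) {W : Matrix m m ℝ}
    (hW : W.IsSymm) (hWQW : W * (A * K * Aᵀ) * W = W) :
    (K - K * Aᵀ * W * A * K).PosSemidef := by
  classical
  have hKs : Kᵀ = K := by simpa using hK.isHermitian.eq
  have key := congrArg (fun X => K * Aᵀ * X * A * K) hWQW
  simp only [Matrix.mul_assoc] at key
  have factor : K - K * Aᵀ * W * A * K
      = (1 - K * Aᵀ * W * A) * K * (1 - K * Aᵀ * W * A)ᴴ := by
    have hT : (1 - K * Aᵀ * W * A)ᴴ = 1 - Aᵀ * W * A * K := by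
      simp only [conjTranspose_eq_transpose_of_trivial, transpose_sub, transpose_one,
        transpose_mul, transpose_transpose, hKs, hW.eq, Matrix.mul_assoc]
    rw [hT]
    simp only [Matrix.sub_mul, Matrix.mul_sub, Matrix.one_mul, Matrix.mul_one, Matrix.mul_assoc,
      key]
    abel
  rw [factor]
  exact hK.mul_mul_conjTranspose_same _

theorem posterior_cov_posSemidef {m n : Type*} [Fintype m] [Fintype n]
    (A : Matrix m n ℝ) (K : Matrix n n ℝ) (W : Matrix m m ℝ)
    (hK : K.PosDef) (hW : IsMoorePenrose (A * K * Aᵀ) W) :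
    (K - K * Aᵀ * W * A * K).PosSemidef := by
  have hQ : (A * K * Aᵀ).IsSymm := by
    simpa [conjTranspose_eq_transpose_of_trivial] using
      isHermitian_mul_mul_conjTranspose A hK.isHermitian
  exact hK.posSemidef.sub_of_isSymm_of_mul_mul_eq A (hW.isSymm hQ) hW.2.1
end

section
/- Let A be an m×n real matrix, P invertible, Q = AP, B = P(I − Q⁺Q). Then the rank of B Bᵀ equals n − rank(A). In particular, the posterior covariance K − K Aᵀ (A K Aᵀ)⁺ A K (with K = PPᵀ) has rank equal to the dimension of the null space of A. -/
/-!
With `Q = A P` and `E = Q⁺ Q`, the Penrose conditions make `E` a symmetric idempotent, so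
`1 - E` is the orthogonal projection onto `ker Q` and `B Bᵀ = P (1 - E) Pᵀ` has rank
`dim ker Q = n - rank A`. The second claim reduces to the first because
`K Aᵀ (A K Aᵀ)⁺ A K = P (Qᵀ (Q Qᵀ)⁺ Q) Pᵀ`, and `Qᵀ (Q Qᵀ)⁺ Q = Q⁺ Q` follows from
`Q⁺ Q Qᵀ = Qᵀ` and `Q Qᵀ (Q Qᵀ)⁺ Q = Q`; so the posterior covariance is exactly `B Bᵀ`.
-/

open Matrix Real

namespace Matrix

variable {m n : Type*} [Fintype n]

theorem finrank_ker_mulVecLin {K : Type*} [Field K] (A : Matrix m n K) :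
    Module.finrank K (LinearMap.ker A.mulVecLin) = Fintype.card n - A.rank := by
  have := LinearMap.finrank_range_add_finrank_ker A.mulVecLin
  rw [Module.finrank_fintype_fun_eq_card] at this
  rw [rank]
  omega

theorem range_mulVecLin_one_sub_mul_eq_ker [Fintype m] {R : Type*} [CommRing R] [DecidableEq n]
    {Q : Matrix m n R} {G : Matrix n m R} (h : Q * G * Q = Q) :
    LinearMap.range (1 - G * Q).mulVecLin = LinearMap.ker Q.mulVecLin := by
  ext x
  constructor
  · rintro ⟨y, rfl⟩
    simp only [LinearMap.mem_ker, mulVecLin_apply, sub_mulVec, one_mulVec, mulVec_sub,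
      mulVec_mulVec, ← Matrix.mul_assoc, h, sub_self]
  · intro hx
    refine ⟨x, ?_⟩
    rw [LinearMap.mem_ker, mulVecLin_apply] at hx
    rw [mulVecLin_apply, sub_mulVec, one_mulVec, ← mulVec_mulVec, hx, mulVec_zero, sub_zero]

theorem rank_one_sub_mul_of_mul_mul_eq [Fintype m] {K : Type*} [Field K] [DecidableEq n]
    {Q : Matrix m n K} {G : Matrix n m K} (h : Q * G * Q = Q) :
    (1 - G * Q).rank = Fintype.card n - Q.rank := by
  rw [rank, range_mulVecLin_one_sub_mul_eq_ker h, finrank_ker_mulVecLin]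

theorem mul_transpose_mul_mul_eq_self [Fintype m] {Q : Matrix m n ℝ} {W : Matrix m m ℝ}
    (h : Q * Qᵀ * W * (Q * Qᵀ) = Q * Qᵀ) : Q * Qᵀ * W * Q = Q := by
  classical
  have h0 : (Q * Qᵀ * W - 1) * (Q * Qᴴ) = 0 := by
    rw [conjTranspose_eq_transpose_of_trivial, Matrix.sub_mul, h, Matrix.one_mul, sub_self]
  rwa [mul_self_mul_conjTranspose_eq_zero, Matrix.sub_mul, Matrix.one_mul, sub_eq_zero] at h0

end Matrix

namespace IsMoorePenrose

variable {m n : Type*} [Fintype m] [Fintype n] {Q : Matrix m n ℝ} {Qp : Matrix n m ℝ}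

theorem mul_mul_transpose (h : IsMoorePenrose Q Qp) : Qp * Q * Qᵀ = Qᵀ := by
  conv_lhs => rw [← h.2.2.2]
  rw [← transpose_mul, ← Matrix.mul_assoc, h.1]

theorem transpose_mul_mul_eq {W : Matrix m m ℝ} (hQp : IsMoorePenrose Q Qp)
    (hW : IsMoorePenrose (Q * Qᵀ) W) : Qᵀ * W * Q = Qp * Q :=
  calc Qᵀ * W * Q = Qp * Q * Qᵀ * W * Q := by rw [hQp.mul_mul_transpose]
    _ = Qp * (Q * Qᵀ * W * Q) := by simp only [Matrix.mul_assoc]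
    _ = Qp * Q := by rw [mul_transpose_mul_mul_eq_self hW.1]

theorem one_sub_mul_mul_transpose_self [DecidableEq n] (h : IsMoorePenrose Q Qp) :
    (1 - Qp * Q) * (1 - Qp * Q)ᵀ = 1 - Qp * Q := by
  have hE : IsIdempotentElem (Qp * Q) := by
    rw [IsIdempotentElem, ← Matrix.mul_assoc, h.2.1]
  rw [transpose_sub, transpose_one, h.2.2.2]
  exact hE.one_sub

theorem posterior_covariance_eq [DecidableEq n] {A : Matrix m n ℝ} {P : Matrix n n ℝ}
    {W : Matrix m m ℝ} (hQp : IsMoorePenrose (A * P) Qp)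
    (hW : IsMoorePenrose (A * (P * Pᵀ) * Aᵀ) W) :
    P * Pᵀ - P * Pᵀ * Aᵀ * W * A * (P * Pᵀ)
      = (P * (1 - Qp * (A * P))) * (P * (1 - Qp * (A * P)))ᵀ := by
  have hW' : IsMoorePenrose (A * P * (A * P)ᵀ) W := by
    simpa only [transpose_mul, Matrix.mul_assoc] using hW
  calc P * Pᵀ - P * Pᵀ * Aᵀ * W * A * (P * Pᵀ)
      = P * Pᵀ - P * ((A * P)ᵀ * W * (A * P)) * Pᵀ := by
        simp only [transpose_mul, Matrix.mul_assoc]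
    _ = P * (1 - Qp * (A * P)) * Pᵀ := by
        rw [hQp.transpose_mul_mul_eq hW', Matrix.mul_sub, Matrix.sub_mul, Matrix.mul_one]
    _ = P * ((1 - Qp * (A * P)) * (1 - Qp * (A * P))ᵀ) * Pᵀ := by
        rw [hQp.one_sub_mul_mul_transpose_self]
    _ = (P * (1 - Qp * (A * P))) * (P * (1 - Qp * (A * P)))ᵀ := by
        simp only [transpose_mul, Matrix.mul_assoc]

end IsMoorePenrose

theorem posterior_cov_rank {m n : Type*} [Fintype m] [Fintype n] [DecidableEq n]
    (A : Matrix m n ℝ) (P : Matrix n n ℝ) (hP : IsUnit P.det)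
    (Qp : Matrix n m ℝ) (W : Matrix m m ℝ)
    (hQp : IsMoorePenrose (A * P) Qp)
    (hW : IsMoorePenrose (A * (P * Pᵀ) * Aᵀ) W) :
    ((P * (1 - Qp * (A * P))) * (P * (1 - Qp * (A * P)))ᵀ).rank
        = Fintype.card n - A.rank ∧
    ((P * Pᵀ) - (P * Pᵀ) * Aᵀ * W * A * (P * Pᵀ)).rank
        = Module.finrank ℝ (LinearMap.ker A.mulVecLin) := by
  have hBBt : ((P * (1 - Qp * (A * P))) * (P * (1 - Qp * (A * P)))ᵀ).rank
      = Fintype.card n - A.rank := by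
    rw [rank_self_mul_transpose, rank_mul_eq_right_of_isUnit_det P _ hP,
      rank_one_sub_mul_of_mul_mul_eq hQp.1, rank_mul_eq_left_of_isUnit_det P A hP]
  refine ⟨hBBt, ?_⟩
  rw [hQp.posterior_covariance_eq hW, hBBt, finrank_ker_mulVecLin]
end

section
/- Suppose u : ℝ → ℝ is twice continuously differentiable and satisfies −u'' = λu on (0,1) with u(0) = u(1) = 0, where λ > 0, and u is not identically zero on [0,1]. Then there exists a positive integer n with λ = (nπ)². -/
/-! With `k = √λ`, the Wronskians of `u` with `sin (k x)` and `cos (k x)` are constant, which forces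
`k u(x) = u'(0) sin (k x)`. Since `u` is nontrivial, `u'(0) ≠ 0`, so `u(1) = 0` gives `sin k = 0`,
i.e. `k = n π` with `n ≥ 1`. -/

open Real Set

theorem wronskian_eqOn_Icc {f f' g g' q : ℝ → ℝ} {a b : ℝ}
    (hf : ∀ x ∈ Icc a b, HasDerivAt f (f' x) x) (hf' : ∀ x ∈ Icc a b, HasDerivAt f' (q x * f x) x)
    (hg : ∀ x ∈ Icc a b, HasDerivAt g (g' x) x) (hg' : ∀ x ∈ Icc a b, HasDerivAt g' (q x * g x) x) :
    ∀ x ∈ Icc a b, f' x * g x - f x * g' x = f' a * g a - f a * g' a := by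
  have hW : ∀ x ∈ Icc a b, HasDerivAt (fun y => f' y * g y - f y * g' y) 0 x := fun x hx =>
    (((hf' x hx).fun_mul (hg x hx)).fun_sub ((hf x hx).fun_mul (hg' x hx))).congr_deriv (by ring)
  exact constant_of_has_deriv_right_zero (fun x hx => (hW x hx).continuousAt.continuousWithinAt)
    fun x hx => (hW x (Ico_subset_Icc_self hx)).hasDerivWithinAt

theorem hasDerivAt_sin_mul_sub (k a x : ℝ) :
    HasDerivAt (fun y => sin (k * (y - a))) (k * cos (k * (x - a))) x := by
  simpa [mul_comm] using ((hasDerivAt_id x).sub_const a |>.const_mul k).sin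

theorem hasDerivAt_cos_mul_sub (k a x : ℝ) :
    HasDerivAt (fun y => cos (k * (y - a))) (-(k * sin (k * (x - a)))) x := by
  simpa [mul_comm] using ((hasDerivAt_id x).sub_const a |>.const_mul k).cos

theorem mul_eq_sin_add_cos_of_hasDerivAt {u u' : ℝ → ℝ} {k a b : ℝ}
    (hu : ∀ x ∈ Icc a b, HasDerivAt u (u' x) x)
    (hu' : ∀ x ∈ Icc a b, HasDerivAt u' (-k ^ 2 * u x) x) :
    ∀ x ∈ Icc a b, k * u x = u' a * sin (k * (x - a)) + k * u a * cos (k * (x - a)) := by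
  have hsin := wronskian_eqOn_Icc (q := fun _ => -k ^ 2) hu hu'
    (fun x _ => hasDerivAt_sin_mul_sub k a x)
    (fun x _ => ((hasDerivAt_cos_mul_sub k a x).const_mul k).congr_deriv (by ring))
  have hcos := wronskian_eqOn_Icc (q := fun _ => -k ^ 2) hu hu'
    (fun x _ => hasDerivAt_cos_mul_sub k a x)
    (fun x _ => ((hasDerivAt_sin_mul_sub k a x).const_mul k).neg.congr_deriv (by ring))
  intro x hx
  have hs := hsin x hx
  have hc := hcos x hx
  simp only [sub_self, mul_zero, sin_zero, cos_zero] at hs hc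
  linear_combination sin (k * (x - a)) * hc - cos (k * (x - a)) * hs
    - k * u x * sin_sq_add_cos_sq (k * (x - a))

theorem exists_nat_eq_mul_pi_of_sin_eq_zero {x : ℝ} (hx : 0 < x) (h : sin x = 0) :
    ∃ n : ℕ, 1 ≤ n ∧ x = n * π := by
  obtain ⟨n, rfl⟩ := sin_eq_zero_iff.mp h
  have hn : (0 : ℝ) < n := pos_of_mul_pos_left hx pi_pos.le
  lift n to ℕ using by exact_mod_cast hn.le
  exact ⟨n, by exact_mod_cast hn, by simp⟩

theorem dirichlet_eigenvalues_are_n_pi_sq (u : ℝ → ℝ) (lam : ℝ)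
    (hu : ContDiff ℝ 2 u)
    (hode : ∀ x ∈ Ioo (0:ℝ) 1, -(deriv (deriv u) x) = lam * u x)
    (h0 : u 0 = 0) (h1 : u 1 = 0) (hlam : 0 < lam)
    (hnt : ∃ x ∈ Icc (0:ℝ) 1, u x ≠ 0) :
    ∃ n : ℕ, 1 ≤ n ∧ lam = (n * π) ^ 2 := by
  have hk : 0 < √lam := sqrt_pos.mpr hlam
  have hu' : ContDiff ℝ 1 (deriv u) := (hu : ContDiff ℝ (1 + 1) u).deriv'
  have hode_Icc : EqOn (deriv (deriv u)) (fun x => -lam * u x) (Icc 0 1) :=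
    EqOn.of_subset_closure (fun x hx => by linarith [hode x hx])
      (hu'.continuous_deriv le_rfl).continuousOn (continuous_const.mul hu.continuous).continuousOn
      Ioo_subset_Icc_self (closure_Ioo zero_ne_one).ge
  have hrep := mul_eq_sin_add_cos_of_hasDerivAt (k := √lam)
    (fun x _ => (hu.differentiable two_ne_zero x).hasDerivAt)
    (fun x hx => by
      rw [sq_sqrt hlam.le, ← show deriv (deriv u) x = -lam * u x from hode_Icc hx]
      exact (hu'.differentiable one_ne_zero x).hasDerivAt)
  simp only [h0, sub_zero, mul_zero, zero_mul, add_zero] at hrep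
  have hu'0 : deriv u 0 ≠ 0 := by
    obtain ⟨x, hx, hux⟩ := hnt
    intro h
    simpa [h, hux, hk.ne'] using hrep x hx
  have hsin : sin √lam = 0 := by
    simpa [h1, hu'0] using (hrep 1 (right_mem_Icc.mpr zero_le_one)).symm
  obtain ⟨n, hn, hk_eq⟩ := exists_nat_eq_mul_pi_of_sin_eq_zero hk hsin
  exact ⟨n, hn, by rw [← hk_eq, sq_sqrt hlam.le]⟩
end
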